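/- arXiv:1903.03034 — 2 statements merged into one kernel-verified Lean document; each statement's English description precedes it below -/
import Mathlib

section
/- Let y, D, g : [0,∞) → [0,∞) with y continuous, D and g locally integrable, C > 0, and suppose that for all t: y(t) + (1/4)∫₀ᵗ D(z) dz ≤ y(0) + (C/2)∫₀ᵗ g(z) y(z) dz. If y(0) · exp((C/2)∫₀^∞ g(z) dz) < 1/16, then y(t) < 1/16 for all t ≥ 0 and y(t) + (1/8)∫₀ᵗ D(z) dz ≤ y(0)·exp((C/2)∫₀^∞ g(z) dz) for all t ≥ 0. -/
/-!
Put `Φ(t) = y(0) + κ ∫₀ᵗ g y` with `κ = C/2`; since `D ≥ 0`, `y ≤ Φ`, and `Φ` is nondecreasing. Then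
`Φ(s') - Φ(s) ≤ κ (∫ₛ^{s'} g) Φ(s')` for `s ≤ s'`. Cutting `[0, t]` by the intermediate value
theorem into `n` pieces on each of which `κ ∫ g` grows by `c/n`, where `c = κ ∫₀ᵗ g`, gives
`Φ(t) ≤ y(0) (1 - c/n)⁻ⁿ`, and letting `n → ∞` gives the integral Gronwall bound
`Φ(t) ≤ y(0) exp(κ ∫₀ᵗ g) ≤ y(0) exp(κ ∫₀^∞ g) < 1/16`. As `y(t) + ¼ ∫₀ᵗ D ≤ Φ(t)`, both claims
follow without any bootstrap.
-/

open Real MeasureTheory Set Filter Topology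

theorem tendsto_inv_one_sub_div_pow_exp (c : ℝ) :
    Tendsto (fun n : ℕ => (1 - c / n)⁻¹ ^ n) atTop (𝓝 (exp c)) := by
  have h := (tendsto_one_add_div_pow_exp (-c)).inv₀ (exp_pos _).ne'
  simpa [exp_neg, inv_pow, neg_div, sub_eq_add_neg] using h

section StepBound

variable {φ G : ℝ → ℝ} {a b : ℝ}

theorem le_mul_inv_one_sub_div_pow_of_le_add_sub_mul (hab : a ≤ b)
    (hG : ContinuousOn G (Icc a b))
    (hstep : ∀ s ∈ Icc a b, ∀ s' ∈ Icc s b, φ s' ≤ φ s + (G s' - G s) * φ s')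
    {n : ℕ} (hn₀ : 0 < n) (hn : G b - G a < n) :
    φ b ≤ φ a * (1 - (G b - G a) / n)⁻¹ ^ n := by
  have hn₀' : (0 : ℝ) < n := by exact_mod_cast hn₀
  set δ := (G b - G a) / n with hδ
  have hGb : G b = G a + n * δ := by rw [hδ]; field_simp; ring
  have hδ₁ : 0 < 1 - δ := by rw [hδ, sub_pos, div_lt_one hn₀']; exact hn
  have hchain : ∀ i ≤ n, ∃ s ∈ Icc a b, G s = G a + i * δ ∧ φ s ≤ φ a * (1 - δ)⁻¹ ^ i := by
    intro i
    induction i with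
    | zero => exact fun _ => ⟨a, ⟨le_rfl, hab⟩, by simp, by simp⟩
    | succ i ih =>
      intro hi
      obtain ⟨s, hs, hGs, hφs⟩ := ih (Nat.le_of_succ_le hi)
      have hi' : (i : ℝ) + 1 ≤ n := by exact_mod_cast hi
      have htarget : G a + (i + 1) * δ ∈ uIcc (G s) (G b) := by
        rw [hGs, hGb, mem_uIcc]
        rcases le_total 0 δ with hδ₀ | hδ₀
        · exact Or.inl ⟨by nlinarith, by nlinarith⟩
        · exact Or.inr ⟨by nlinarith, by nlinarith⟩
      have hGsb : ContinuousOn G (uIcc s b) := by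
        rw [uIcc_of_le hs.2]; exact hG.mono (Icc_subset_Icc_left hs.1)
      obtain ⟨s', hs', hGs'⟩ := intermediate_value_uIcc hGsb htarget
      rw [uIcc_of_le hs.2] at hs'
      have hφs' : φ s' * (1 - δ) ≤ φ s := by
        have := hstep s hs s' hs'
        rw [hGs', hGs] at this
        linarith
      refine ⟨s', ⟨hs.1.trans hs'.1, hs'.2⟩, by rw [hGs']; push_cast; ring, ?_⟩
      calc φ s' ≤ φ s * (1 - δ)⁻¹ := by rw [← div_eq_mul_inv, le_div_iff₀ hδ₁]; exact hφs'
        _ ≤ φ a * (1 - δ)⁻¹ ^ i * (1 - δ)⁻¹ := by gcongr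
        _ = φ a * (1 - δ)⁻¹ ^ (i + 1) := by ring
  obtain ⟨s, hs, hGs, hφs⟩ := hchain n le_rfl
  have hlast := hstep s hs b ⟨hs.2, le_rfl⟩
  rw [hGb, hGs, sub_self, zero_mul, add_zero] at hlast
  exact hlast.trans hφs

theorem le_mul_exp_sub_of_le_add_sub_mul (hab : a ≤ b) (hG : ContinuousOn G (Icc a b))
    (hstep : ∀ s ∈ Icc a b, ∀ s' ∈ Icc s b, φ s' ≤ φ s + (G s' - G s) * φ s') :
    φ b ≤ φ a * exp (G b - G a) := by
  refine ge_of_tendsto ((tendsto_inv_one_sub_div_pow_exp _).const_mul (φ a)) ?_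
  filter_upwards [eventually_gt_atTop ⌈G b - G a⌉₊, eventually_gt_atTop 0] with n hn hn₀
  exact le_mul_inv_one_sub_div_pow_of_le_add_sub_mul hab hG hstep hn₀ (Nat.lt_of_ceil_lt hn)

end StepBound

section IntegralGronwall

variable {y g : ℝ → ℝ} {y₀ κ a t : ℝ}

theorem monotoneOn_add_mul_integral {f : ℝ → ℝ} (hκ : 0 ≤ κ) (hf : ∀ z ∈ Icc a t, 0 ≤ f z)
    (hfi : IntervalIntegrable f volume a t) :
    MonotoneOn (fun s => y₀ + κ * ∫ z in a..s, f z) (Icc a t) := by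
  intro s hs s' hs' hss'
  have hnonneg : 0 ≤ᵐ[volume.restrict (Ioc a s')] f :=
    (ae_restrict_mem measurableSet_Ioc).mono fun z hz => hf z ⟨hz.1.le, hz.2.trans hs'.2⟩
  have hfi' : IntervalIntegrable f volume a s' :=
    hfi.mono_set (uIcc_subset_uIcc_left (Icc_subset_uIcc hs'))
  dsimp only
  gcongr
  exact intervalIntegral.integral_mono_interval le_rfl hs.1 hss' hnonneg hfi'

theorem add_mul_integral_le_mul_exp_of_le_add_mul_integral
    (hκ : 0 ≤ κ) (hat : a ≤ t) (hy : ∀ z ∈ Icc a t, 0 ≤ y z) (hg : ∀ z ∈ Icc a t, 0 ≤ g z)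
    (hgi : IntervalIntegrable g volume a t)
    (hgyi : IntervalIntegrable (fun z => g z * y z) volume a t)
    (hle : ∀ s ∈ Icc a t, y s ≤ y₀ + κ * ∫ z in a..s, g z * y z) :
    y₀ + κ * ∫ z in a..t, g z * y z ≤ y₀ * exp (κ * ∫ z in a..t, g z) := by
  set Φ : ℝ → ℝ := fun s => y₀ + κ * ∫ z in a..s, g z * y z with hΦ
  set G : ℝ → ℝ := fun s => κ * ∫ z in a..s, g z with hG
  have hsub : ∀ {f : ℝ → ℝ}, IntervalIntegrable f volume a t → ∀ s ∈ Icc a t, ∀ s' ∈ Icc s t,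
      (∫ z in a..s', f z) - ∫ z in a..s, f z = ∫ z in s..s', f z := fun hf s hs s' hs' =>
    intervalIntegral.integral_interval_sub_left
      (hf.mono_set (uIcc_subset_uIcc_left (Icc_subset_uIcc ⟨hs.1.trans hs'.1, hs'.2⟩)))
      (hf.mono_set (uIcc_subset_uIcc_left (Icc_subset_uIcc hs)))
  have hsubi : ∀ {f : ℝ → ℝ}, IntervalIntegrable f volume a t → ∀ s ∈ Icc a t, ∀ s' ∈ Icc s t,
      IntervalIntegrable f volume s s' := fun hf s hs s' hs' =>
    hf.mono_set (uIcc_subset_uIcc (Icc_subset_uIcc hs) (Icc_subset_uIcc ⟨hs.1.trans hs'.1, hs'.2⟩))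
  have hΦmono : MonotoneOn Φ (Icc a t) :=
    monotoneOn_add_mul_integral hκ (fun z hz => mul_nonneg (hg z hz) (hy z hz)) hgyi
  have hstep : ∀ s ∈ Icc a t, ∀ s' ∈ Icc s t, Φ s' ≤ Φ s + (G s' - G s) * Φ s' := by
    intro s hs s' hs'
    have hint : (∫ z in s..s', g z * y z) ≤ (∫ z in s..s', g z) * Φ s' := by
      rw [← intervalIntegral.integral_mul_const]
      refine intervalIntegral.integral_mono_on hs'.1 (hsubi hgyi s hs s' hs')
        ((hsubi hgi s hs s' hs').mul_const _) fun z hz => ?_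
      have hz' : z ∈ Icc a t := ⟨hs.1.trans hz.1, hz.2.trans hs'.2⟩
      exact mul_le_mul_of_nonneg_left ((hle z hz').trans (hΦmono hz' ⟨hs.1.trans hs'.1, hs'.2⟩ hz.2))
        (hg z hz')
    have hΦs' : Φ s' = Φ s + κ * ∫ z in s..s', g z * y z := by
      simp only [hΦ]; rw [← hsub hgyi s hs s' hs']; ring
    have hGs' : G s' - G s = κ * ∫ z in s..s', g z := by
      simp only [hG]; rw [← hsub hgi s hs s' hs']; ring
    calc Φ s' = Φ s + κ * ∫ z in s..s', g z * y z := hΦs'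
      _ ≤ Φ s + κ * ((∫ z in s..s', g z) * Φ s') := by gcongr
      _ = Φ s + (G s' - G s) * Φ s' := by rw [hGs']; ring
  have hGcont : ContinuousOn G (Icc a t) := by
    have := intervalIntegral.continuousOn_primitive_interval (μ := volume)
      ((intervalIntegrable_iff_integrableOn_Icc_of_le hat).1 hgi |>.mono_set (uIcc_of_le hat).le)
    rw [uIcc_of_le hat] at this
    exact continuousOn_const.mul this
  simpa [hΦ, hG] using le_mul_exp_sub_of_le_add_sub_mul hat hGcont hstep

end IntegralGronwall

theorem gronwall_stability_estimate_general (y D g : ℝ → ℝ) (C : ℝ) (hC : 0 < C)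
    (hy : ∀ t, 0 ≤ y t) (hD : ∀ t, 0 ≤ D t) (hg : ∀ t, 0 ≤ g t)
    (hyc : Continuous y)
    (hgint : IntegrableOn g (Set.Ioi 0))
    (hineq : ∀ t, 0 ≤ t →
      y t + (1/4) * ∫ z in (0:ℝ)..t, D z ≤ y 0 + (C/2) * ∫ z in (0:ℝ)..t, g z * y z)
    (hsmall : y 0 * Real.exp ((C/2) * ∫ z in Set.Ioi (0:ℝ), g z) < 1/16) :
    ∀ t, 0 ≤ t → y t < 1/16 ∧
      y t + (1/8) * ∫ z in (0:ℝ)..t, D z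
        ≤ y 0 * Real.exp ((C/2) * ∫ z in Set.Ioi (0:ℝ), g z) := by
  have hDnn : ∀ t, 0 ≤ t → 0 ≤ ∫ z in (0:ℝ)..t, D z := fun t ht =>
    intervalIntegral.integral_nonneg ht fun z _ => hD z
  intro t ht
  have hgi : IntervalIntegrable g volume 0 t :=
    (intervalIntegrable_iff_integrableOn_Ioc_of_le ht).2 (hgint.mono_set Ioc_subset_Ioi_self)
  have hgronwall := add_mul_integral_le_mul_exp_of_le_add_mul_integral (y₀ := y 0)
    (κ := C / 2) (by positivity) ht
    (fun z _ => hy z) (fun z _ => hg z) hgi (hgi.mul_continuousOn hyc.continuousOn)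
    fun s hs => by linarith [hineq s hs.1, hDnn s hs.1]
  have htail : ∫ z in (0:ℝ)..t, g z ≤ ∫ z in Ioi (0:ℝ), g z := by
    rw [intervalIntegral.integral_of_le ht]
    exact setIntegral_mono_set hgint (Eventually.of_forall hg) Ioc_subset_Ioi_self.eventuallyLE
  have hexp : y 0 * exp ((C/2) * ∫ z in (0:ℝ)..t, g z)
      ≤ y 0 * exp ((C/2) * ∫ z in Ioi (0:ℝ), g z) := by
    gcongr
    exact hy 0
  have hbound := (hineq t ht).trans (hgronwall.trans hexp)
  constructor <;> linarith [hDnn t ht]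

theorem gronwall_stability_estimate (y D g : ℝ → ℝ) (C : ℝ) (hC : 0 < C)
    (hy : ∀ t, 0 ≤ y t) (hD : ∀ t, 0 ≤ D t) (hg : ∀ t, 0 ≤ g t)
    (hyc : Continuous y)
    (hDloc : ∀ t, 0 ≤ t → IntegrableOn D (Set.Ioc 0 t))
    (hgint : IntegrableOn g (Set.Ioi 0))
    (hineq : ∀ t, 0 ≤ t →
      y t + (1/4) * ∫ z in (0:ℝ)..t, D z ≤ y 0 + (C/2) * ∫ z in (0:ℝ)..t, g z * y z)
    (hsmall : y 0 * Real.exp ((C/2) * ∫ z in Set.Ioi (0:ℝ), g z) < 1/16) :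
    ∀ t, 0 ≤ t → y t < 1/16 ∧
      y t + (1/8) * ∫ z in (0:ℝ)..t, D z
        ≤ y 0 * Real.exp ((C/2) * ∫ z in Set.Ioi (0:ℝ), g z) :=
  gronwall_stability_estimate_general y D g C hC hy hD hg hyc hgint hineq hsmall
end

section
/- Suppose φ : [0,∞) → [0,∞) is non-increasing on [t₀,∞) for some t₀ ≥ 0, ψ : [0,∞) → [0,∞) is non-increasing on [t₁,∞), and for all t with t/2 > max(t₀,t₁): φ(t)² + ∫_{t/2}^{t} ψ(z)² dz ≤ φ(t/2)². Then ψ(t)² ≤ (2/t)·φ(t/2)² for all t with t/2 > max(t₀,t₁). Consequently, if φ(t) = o(t^{−k/2}) as t → ∞ then ψ(t) = o(t^{−(k+1)/2}) as t → ∞. -/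
open Real MeasureTheory Filter Asymptotics

/-!
Since `ψ²` is non-increasing on `[t/2, t]`, `(t/2) ψ(t)² ≤ ∫_{t/2}^t ψ² ≤ φ(t/2)²`. Hence
`|ψ(t)| ≤ √2 t^{-1/2} |φ(t/2)|`, and `φ(t/2) = o(t^s)` whenever `φ(t) = o(t^s)`, because
`(t/2)^s` is a constant multiple of `t^s`.
-/

theorem AntitoneOn.sub_mul_le_intervalIntegral {f : ℝ → ℝ} {a b : ℝ} (hab : a ≤ b)
    (hf : AntitoneOn f (Set.Icc a b)) : (b - a) * f b ≤ ∫ x in a..b, f x := by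
  have hint : IntervalIntegrable f volume a b :=
    (Set.uIcc_of_le hab ▸ hf).intervalIntegrable
  simpa using intervalIntegral.integral_mono_on hab intervalIntegrable_const hint
    fun x hx => hf hx ⟨hab, le_rfl⟩ hx.2

theorem sq_le_of_energy_inequality {φ ψ : ℝ → ℝ} {t : ℝ} (ht : 0 < t)
    (hψ : ∀ z ∈ Set.Icc (t / 2) t, 0 ≤ ψ z) (hψmono : AntitoneOn ψ (Set.Icc (t / 2) t))
    (hineq : φ t ^ 2 + ∫ z in (t / 2)..t, ψ z ^ 2 ≤ φ (t / 2) ^ 2) :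
    ψ t ^ 2 ≤ (2 / t) * φ (t / 2) ^ 2 := by
  have hsq : AntitoneOn (fun z => ψ z ^ 2) (Set.Icc (t / 2) t) := fun x hx y hy hxy =>
    pow_le_pow_left₀ (hψ y hy) (hψmono hx hy hxy) 2
  have hlow := hsq.sub_mul_le_intervalIntegral (by linarith)
  rw [div_mul_eq_mul_div, le_div_iff₀ ht]
  linarith [sq_nonneg (φ t)]

theorem abs_le_sqrt_mul_abs_of_sq_le {x y c : ℝ} (h : x ^ 2 ≤ c * y ^ 2) :
    |x| ≤ √c * |y| := by
  simpa [Real.sqrt_sq_eq_abs, Real.sqrt_mul' c (sq_nonneg y)] using Real.sqrt_le_sqrt h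

theorem isLittleO_rpow_sub_half_of_sq_le {φ ψ : ℝ → ℝ} {s : ℝ}
    (hbound : ∀ᶠ t in atTop, ψ t ^ 2 ≤ (2 / t) * φ (t / 2) ^ 2)
    (hφ : φ =o[atTop] fun t => t ^ s) :
    ψ =o[atTop] fun t => t ^ (s - 1 / 2) := by
  have hψ : ψ =O[atTop] fun t => √(2 / t) * φ (t / 2) :=
    .of_bound' <| hbound.mono fun t ht => by
      rw [norm_mul, Real.norm_of_nonneg (sqrt_nonneg _)]
      exact abs_le_sqrt_mul_abs_of_sq_le ht
  have hsqrt : (fun t : ℝ => √(2 / t)) =O[atTop] fun t => t ^ (-(1 / 2 : ℝ)) :=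
    ((isBigO_refl _ _).const_mul_left √2).congr'
      ((eventually_ge_atTop 0).mono fun t ht => by
        dsimp only
        rw [Real.sqrt_div zero_le_two, Real.sqrt_eq_rpow t, rpow_neg ht, ← div_eq_mul_inv]) .rfl
  have hhalf : (fun t : ℝ => (t / 2) ^ s) =O[atTop] fun t => t ^ s :=
    ((isBigO_refl _ _).const_mul_left (2 ^ s)⁻¹).congr'
      ((eventually_ge_atTop 0).mono fun t ht => by
        dsimp only
        rw [Real.div_rpow ht zero_le_two, div_eq_inv_mul]) .rfl
  have hφhalf : (fun t => φ (t / 2)) =o[atTop] fun t => t ^ s :=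
    (hφ.comp_tendsto (tendsto_id.atTop_div_const two_pos)).trans_isBigO hhalf
  refine (hψ.trans_isLittleO (hsqrt.mul_isLittleO hφhalf)).congr' .rfl ?_
  filter_upwards [eventually_gt_atTop 0] with t ht
  rw [← rpow_add ht]
  ring_nf

theorem decay_bootstrap_general (φ ψ : ℝ → ℝ) (hψ : ∀ t, 0 ≤ ψ t)
    (t₀ t₁ : ℝ) (ht₀ : 0 ≤ t₀)
    (hψmono : AntitoneOn ψ (Set.Ici t₁))
    (hineq : ∀ t, max t₀ t₁ < t / 2 →
      φ t ^ 2 + ∫ z in (t/2)..t, ψ z ^ 2 ≤ φ (t/2) ^ 2) (k : ℕ) :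
    (∀ t, max t₀ t₁ < t / 2 → ψ t ^ 2 ≤ (2 / t) * φ (t/2) ^ 2) ∧
    ((φ =o[atTop] fun t : ℝ => t ^ (-(k:ℝ)/2)) →
      ψ =o[atTop] fun t : ℝ => t ^ (-((k:ℝ)+1)/2)) := by
  have hbound : ∀ t, max t₀ t₁ < t / 2 → ψ t ^ 2 ≤ (2 / t) * φ (t/2) ^ 2 := by
    intro t ht
    have ht₁ : t₁ < t / 2 := (le_max_right t₀ t₁).trans_lt ht
    exact sq_le_of_energy_inequality (by linarith [le_max_left t₀ t₁])
      (fun z _ => hψ z) (hψmono.mono fun z hz => ht₁.le.trans hz.1) (hineq t ht)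
  refine ⟨hbound, fun hφ => ?_⟩
  have hlarge : ∀ᶠ t : ℝ in atTop, max t₀ t₁ < t / 2 :=
    (tendsto_id.atTop_div_const two_pos).eventually_gt_atTop _
  convert isLittleO_rpow_sub_half_of_sq_le (hlarge.mono hbound) hφ using 3
  ring

theorem decay_bootstrap (φ ψ : ℝ → ℝ) (hφ : ∀ t, 0 ≤ φ t) (hψ : ∀ t, 0 ≤ ψ t)
    (t₀ t₁ : ℝ) (ht₀ : 0 ≤ t₀) (ht₁ : 0 ≤ t₁)
    (hφmono : AntitoneOn φ (Set.Ici t₀)) (hψmono : AntitoneOn ψ (Set.Ici t₁))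
    (hineq : ∀ t, max t₀ t₁ < t / 2 →
      φ t ^ 2 + ∫ z in (t/2)..t, ψ z ^ 2 ≤ φ (t/2) ^ 2) (k : ℕ) :
    (∀ t, max t₀ t₁ < t / 2 → ψ t ^ 2 ≤ (2 / t) * φ (t/2) ^ 2) ∧
    ((φ =o[atTop] fun t : ℝ => t ^ (-(k:ℝ)/2)) →
      ψ =o[atTop] fun t : ℝ => t ^ (-((k:ℝ)+1)/2)) :=
  decay_bootstrap_general φ ψ hψ t₀ t₁ ht₀ hψmono hineq k
end
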